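/- Let P = p_1...p_n with p_1 = A, p_n = G, and P̄_i = {A,C,T}\{p_i}. The set of strings of the form P^{t_1-1}\bar{p}_{t_1} ⋯ P^{t_r-1}\bar{p}_{t_r} W with r ≥ 0, 1 ≤ t_j < n, \bar{p}_{t_j} ∈ P̄_{t_j}, and W ∈ {A,T,C}^{t_0}, 0 ≤ t_0 < n, is uniquely parsable: two such factorizations producing the same string must have the same r, the same (t_j, \bar{p}_{t_j}) sequence, and the same W. -/
import Mathlib


inductive Base : Type
  | A | T | G | C
deriving DecidableEq

/-- A word `X` is self-uncorrelated if no proper nonempty prefix of `X`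
is also a suffix of `X`. -/
def selfUncorr {α : Type*} (X : List α) : Prop :=
  ∀ k : ℕ, 0 < k → k < X.length → X.take k ≠ X.drop (X.length - k)

/-- `PSFact P L W Z` : `Z` is the rendering of the factorization given by the block
list `L = [(t₁,q₁),…,(tᵣ,qᵣ)]` and terminal word `W`, i.e.
`Z = P^{t₁-1} q₁ ⋯ P^{tᵣ-1} qᵣ W`, where each block consists of the proper prefix
`P^{t-1}` of `P` followed by `q ∈ {A,C,T} \ {p_t}`, a block is emitted only while
the remaining length is at least `n = |P|`, and `W ∈ {A,T,C}^{t₀}` with `t₀ < n`. -/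
inductive PSFact (P : List Base) : List (ℕ × Base) → List Base → List Base → Prop
  | term (W : List Base) (hlen : W.length < P.length)
      (hW : ∀ a ∈ W, a ≠ Base.G) : PSFact P [] W W
  | block (t : ℕ) (q : Base) (L : List (ℕ × Base)) (W Z : List Base)
      (ht1 : 1 ≤ t) (ht2 : t < P.length) (hq : q ≠ Base.G)
      (hq2 : ∀ (h : t - 1 < P.length), q ≠ P.get ⟨t - 1, h⟩)
      (hrem : P.length ≤ t + Z.length)
      (hZ : PSFact P L W Z) : PSFact P ((t, q) :: L) W (P.take (t - 1) ++ q :: Z)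

lemma myaux {t t' : ℕ} {P Z Z' : List Base} {q q' : Base}
    (ht1 : 1 ≤ t) (ht2 : t < P.length) (hlt : t < t')
    (hE : P.take (t - 1) ++ q :: Z = P.take (t' - 1) ++ q' :: Z') :
    q = P.get ⟨t - 1, by omega⟩ := by
  have hl : (P.take (t - 1)).length = t - 1 := by
    simp [List.length_take]; omega
  have h1 : (P.take (t - 1) ++ q :: Z)[t-1]? = some q := by
    rw [List.getElem?_append_right (by omega), hl]
    simp
  have h2 : (P.take (t' - 1) ++ q' :: Z')[t-1]? = P[t-1]? := by
    rw [List.getElem?_append_left (by simp [List.length_take]; omega),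
      List.getElem?_take_of_lt (by omega)]
  rw [hE, h2, List.getElem?_eq_getElem (by omega)] at h1
  simpa using h1.symm

/-- Unique parsability of prefix-synchronized codewords: two factorizations
producing the same string have the same block sequence and terminal word. -/
theorem stmt12 (P : List Base) (hsu : selfUncorr P)
    (hhead : P.head? = some Base.A) (hlast : P.getLast? = some Base.G)
    (L L' : List (ℕ × Base)) (W W' Z : List Base)
    (h1 : PSFact P L W Z) (h2 : PSFact P L' W' Z) : L = L' ∧ W = W' := by
  induction h1 generalizing L' W' with
  | term W hlen hW =>
    cases h2 with
    | term W' hlen' hW' => exact ⟨rfl, rfl⟩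
    | block t' q' L'' W' Z' ht1 ht2 hq hq2 hrem hZ =>
      exfalso
      have : (P.take (t' - 1) ++ q' :: Z').length = t' + Z'.length := by
        simp [List.length_take]; omega
      omega
  | block t q L W Z ht1 ht2 hq hq2 hrem hZ ih =>
    generalize hYe : P.take (t - 1) ++ q :: Z = Y at h2
    cases h2 with
    | term W' hlen' hW' =>
      exfalso
      have : (P.take (t - 1) ++ q :: Z).length = t + Z.length := by
        simp [List.length_take]; omega
      rw [hYe] at this
      omega
    | block t' q' L'' W' Z' ht1' ht2' hq' hq2' hrem' hZ' =>
      have htt : t = t' := by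
        rcases lt_trichotomy t t' with h | h | h
        · exact absurd (myaux ht1 ht2 h hYe) (hq2 (by omega))
        · exact h
        · exact absurd (myaux ht1' ht2' h hYe.symm) (hq2' (by omega))
      subst htt
      have hqz : q' :: Z' = q :: Z := List.append_cancel_left hYe.symm
      have hq'' : q' = q := (List.cons.injEq _ _ _ _).mp hqz |>.1
      have hZ'' : Z' = Z := (List.cons.injEq _ _ _ _).mp hqz |>.2
      subst hq''; subst hZ''
      obtain ⟨hL, hW⟩ := ih L'' W' hZ'
      exact ⟨by rw [hL], hW⟩
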